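/- arXiv:1409.5245 — 2 statements merged into one kernel-verified Lean document; each statement's English description precedes it below -/
import Mathlib

section
/- Let f be differentiable on the interior of an interval I with f′ integrable on [a,b]⊂I, a<b, and g:[a,b]→ℝ continuous. If |f′| is convex on [a,b], then for α>0: |f((a+b)/2)·[J_{((a+b)/2)−}^α g(a) + J_{((a+b)/2)+}^α g(b)] − [J_{((a+b)/2)−}^α(fg)(a) + J_{((a+b)/2)+}^α(fg)(b)]| ≤ ((b−a)^{α+1} ‖g‖_{[a,b],∞}) / (2^{α+1} Γ(α+1)(α+1)) · (|f′(a)| + |f′(b)|). -/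
open intervalIntegral MeasureTheory

noncomputable def Jminus (α c : ℝ) (h : ℝ → ℝ) (a : ℝ) : ℝ :=
  (1 / Real.Gamma α) * ∫ t in a..c, (t - a) ^ (α - 1) * h t

noncomputable def Jplus (α c : ℝ) (h : ℝ → ℝ) (b : ℝ) : ℝ :=
  (1 / Real.Gamma α) * ∫ t in c..b, (b - t) ^ (α - 1) * h t

/-- sup norm of `g` on `[a,b]`. -/
noncomputable def supNorm (g : ℝ → ℝ) (a b : ℝ) : ℝ :=
  ⨆ t : Set.Icc a b, |g (t : ℝ)|

lemma aux_rpow_left (a m p : ℝ) (hp : -1 < p) :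
    ∫ t in a..m, (t - a) ^ p = (m - a) ^ (p + 1) / (p + 1) := by
  rw [intervalIntegral.integral_comp_sub_right (fun x => x ^ p) a, sub_self,
    integral_rpow (Or.inl hp), Real.zero_rpow (by linarith), sub_zero]

lemma aux_rpow_right (m b p : ℝ) (hp : -1 < p) :
    ∫ t in m..b, (b - t) ^ p = (b - m) ^ (p + 1) / (p + 1) := by
  rw [intervalIntegral.integral_comp_sub_left (fun x => x ^ p) b, sub_self,
    integral_rpow (Or.inl hp), Real.zero_rpow (by linarith), sub_zero]

set_option maxHeartbeats 2000000 in
theorem fejer_fractional_convex_bound (a b : ℝ) (hab : a < b) (α : ℝ) (hα : 0 < α)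
    (f f' g : ℝ → ℝ)
    (hf : ∀ t ∈ Set.Ioo a b, HasDerivAt f (f' t) t)
    (hf'int : IntervalIntegrable f' volume a b)
    (hg : ContinuousOn g (Set.Icc a b))
    (habs : ConvexOn ℝ (Set.Icc a b) (fun t => |f' t|)) :
    |f ((a + b) / 2) * (Jminus α ((a + b) / 2) g a + Jplus α ((a + b) / 2) g b) -
      (Jminus α ((a + b) / 2) (fun t => f t * g t) a +
        Jplus α ((a + b) / 2) (fun t => f t * g t) b)| ≤
    (b - a) ^ (α + 1) * supNorm g a b / ((2:ℝ) ^ (α + 1) * Real.Gamma (α + 1) * (α + 1)) *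
      (|f' a| + |f' b|) := by
  have hba : (0:ℝ) < b - a := by linarith
  set m : ℝ := (a + b) / 2 with hm
  set h : ℝ := (b - a) / 2 with hh
  have hh0 : 0 < h := by positivity
  have ham : a < m := by rw [hm]; linarith
  have hmb : m < b := by rw [hm]; linarith
  have hma : m - a = h := by rw [hm, hh]; ring
  have hbm : b - m = h := by rw [hm, hh]; ring
  set A : ℝ := |f' a| with hA
  set B : ℝ := |f' b| with hB
  set M : ℝ := supNorm g a b with hMdef
  have hΓ : 0 < Real.Gamma α := Real.Gamma_pos_of_pos hα
  have hIccab : Set.uIcc a b = Set.Icc a b := Set.uIcc_of_le hab.le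
  -- bound for g
  have hM : ∀ t ∈ Set.Icc a b, |g t| ≤ M := by
    obtain ⟨C, hC⟩ := isCompact_Icc.exists_bound_of_continuousOn hg
    intro t ht
    refine le_ciSup (f := fun t : Set.Icc a b => |g (t : ℝ)|) ⟨C, ?_⟩ ⟨t, ht⟩
    rintro x ⟨s, rfl⟩
    simpa using hC s s.2
  have hM0 : 0 ≤ M := le_trans (abs_nonneg _) (hM a (Set.left_mem_Icc.2 hab.le))
  -- chord bound for |f'|
  set c1 : ℝ := (b * A - a * B) / (b - a) with hc1
  set c2 : ℝ := (B - A) / (b - a) with hc2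
  have hL : ∀ s ∈ Set.Icc a b, |f' s| ≤ c1 + c2 * s := by
    intro s hs
    have hp : 0 ≤ (b - s) / (b - a) := by
      apply div_nonneg _ hba.le; linarith [hs.2]
    have hq : 0 ≤ (s - a) / (b - a) := by
      apply div_nonneg _ hba.le; linarith [hs.1]
    have hpq : (b - s) / (b - a) + (s - a) / (b - a) = 1 := by field_simp; ring
    have key := habs.2 (Set.left_mem_Icc.2 hab.le) (Set.right_mem_Icc.2 hab.le) hp hq hpq
    simp only [smul_eq_mul] at key
    have hx : (b - s) / (b - a) * a + (s - a) / (b - a) * b = s := by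
      field_simp; ring
    rw [hx] at key
    refine le_trans key (le_of_eq ?_)
    rw [hc1, hc2, hA, hB]
    field_simp
    ring
  -- the primitive φ
  set φ : ℝ → ℝ := fun t => ∫ s in t..m, f' s with hφdef
  have hφswap : ∀ t, φ t = -∫ s in m..t, f' s := fun t =>
    intervalIntegral.integral_symm m t
  have hφcont : ContinuousOn φ (Set.Icc a b) := by
    have h1 : ContinuousOn (fun t => ∫ s in m..t, f' s) (Set.Icc a b) := by
      rw [← hIccab]
      exact intervalIntegral.continuousOn_primitive_interval' hf'int
        (by rw [hIccab]; exact ⟨ham.le, hmb.le⟩)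
    rw [show φ = fun t => -∫ s in m..t, f' s from funext hφswap]
    exact h1.neg
  have hfφ : ∀ t ∈ Set.Ioo a b, f t = f m - φ t := by
    intro t ht
    have hsub : Set.uIcc t m ⊆ Set.Ioo a b :=
      Set.ordConnected_Ioo.uIcc_subset ht ⟨ham, hmb⟩
    have := intervalIntegral.integral_eq_sub_of_hasDerivAt
      (f := f) (f' := f') (a := t) (b := m)
      (fun x hx => hf x (hsub hx))
      (hf'int.mono_set (by
        rw [hIccab]
        exact Set.ordConnected_Icc.uIcc_subset (Set.mem_Icc.2 ⟨ht.1.le, ht.2.le⟩)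
          (Set.mem_Icc.2 ⟨ham.le, hmb.le⟩)))
    rw [hφdef]; simp only; linarith [this]
  -- integrability of f' pieces
  have hf'sub : ∀ u v, u ∈ Set.Icc a b → v ∈ Set.Icc a b → IntervalIntegrable f' volume u v := by
    intro u v hu hv
    exact hf'int.mono_set (by rw [hIccab]; exact Set.ordConnected_Icc.uIcc_subset hu hv)
  -- Q : the integral of the chord bound
  set Q : ℝ → ℝ := fun t => c1 * (m - t) + c2 * (m ^ 2 - t ^ 2) / 2 with hQdef
  have hLint : ∀ u v : ℝ, IntervalIntegrable (fun s => c1 + c2 * s) volume u v := by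
    intro u v; apply Continuous.intervalIntegrable; fun_prop
  have hQint : ∀ t : ℝ, (∫ s in t..m, (c1 + c2 * s)) = Q t := by
    intro t
    have h2 : IntervalIntegrable (fun s : ℝ => c2 * s) volume t m := by
      apply Continuous.intervalIntegrable; fun_prop
    rw [intervalIntegral.integral_add intervalIntegrable_const h2]
    rw [intervalIntegral.integral_const_mul, integral_id, intervalIntegral.integral_const]
    rw [hQdef]; simp only [smul_eq_mul]; ring
  have hφQ1 : ∀ t ∈ Set.Icc a m, |φ t| ≤ Q t := by
    intro t ht
    have htab : t ∈ Set.Icc a b := ⟨ht.1, le_trans ht.2 hmb.le⟩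
    calc |φ t| ≤ ∫ s in t..m, |f' s| :=
          intervalIntegral.abs_integral_le_integral_abs ht.2
      _ ≤ ∫ s in t..m, (c1 + c2 * s) := by
          apply intervalIntegral.integral_mono_on ht.2
            (hf'sub t m htab ⟨ham.le, hmb.le⟩).abs (hLint t m)
          intro s hs
          exact hL s ⟨le_trans ht.1 hs.1, le_trans hs.2 hmb.le⟩
      _ = Q t := hQint t
  have hφQ2 : ∀ t ∈ Set.Icc m b, |φ t| ≤ -Q t := by
    intro t ht
    have htab : t ∈ Set.Icc a b := ⟨le_trans ham.le ht.1, ht.2⟩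
    calc |φ t| = |∫ s in m..t, f' s| := by rw [hφswap t, abs_neg]
      _ ≤ ∫ s in m..t, |f' s| := intervalIntegral.abs_integral_le_integral_abs ht.1
      _ ≤ ∫ s in m..t, (c1 + c2 * s) := by
          apply intervalIntegral.integral_mono_on ht.1
            (hf'sub m t ⟨ham.le, hmb.le⟩ htab).abs (hLint m t)
          intro s hs
          exact hL s ⟨le_trans ham.le hs.1, le_trans hs.2 ht.2⟩
      _ = -Q t := by rw [intervalIntegral.integral_symm, hQint t]
  -- integrability of rpow weights
  have hrpow1 : IntervalIntegrable (fun t => (t - a) ^ (α - 1)) volume a m := by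
    have := (intervalIntegrable_rpow' (a := 0) (b := m - a)
      (show (-1:ℝ) < α - 1 by linarith)).comp_sub_right a
    simpa using this
  have hrpow2 : IntervalIntegrable (fun t => (b - t) ^ (α - 1)) volume m b := by
    have := (intervalIntegrable_rpow' (a := b - m) (b := 0)
      (show (-1:ℝ) < α - 1 by linarith)).comp_sub_left b
    simpa using this
  have hrpow1' : ∀ p : ℝ, -1 < p → IntervalIntegrable (fun t => (t - a) ^ p) volume a m := by
    intro p hp
    have := (intervalIntegrable_rpow' (a := 0) (b := m - a) hp).comp_sub_right a
    simpa using this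
  have hrpow2' : ∀ p : ℝ, -1 < p → IntervalIntegrable (fun t => (b - t) ^ p) volume m b := by
    intro p hp
    have := (intervalIntegrable_rpow' (a := b - m) (b := 0) hp).comp_sub_left b
    simpa using this
  have hQcont : Continuous Q := by rw [hQdef]; fun_prop
  have huIcc1 : Set.uIcc a m ⊆ Set.Icc a b := by
    rw [Set.uIcc_of_le ham.le]; exact Set.Icc_subset_Icc_right hmb.le
  have huIcc2 : Set.uIcc m b ⊆ Set.Icc a b := by
    rw [Set.uIcc_of_le hmb.le]; exact Set.Icc_subset_Icc_left ham.le
  -- rewrite of the main expression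
  set W1 : ℝ := ∫ t in a..m, (t - a) ^ (α - 1) * (φ t * g t) with hW1
  set W2 : ℝ := ∫ t in m..b, (b - t) ^ (α - 1) * (φ t * g t) with hW2
  have hint_g1 : IntervalIntegrable (fun t => (t - a) ^ (α - 1) * g t) volume a m :=
    hrpow1.mul_continuousOn (hg.mono huIcc1)
  have hint_g2 : IntervalIntegrable (fun t => (b - t) ^ (α - 1) * g t) volume m b :=
    hrpow2.mul_continuousOn (hg.mono huIcc2)
  have hint_ψ1 : IntervalIntegrable (fun t => (t - a) ^ (α - 1) * (φ t * g t)) volume a m :=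
    hrpow1.mul_continuousOn (((hφcont.mul hg).mono huIcc1))
  have hint_ψ2 : IntervalIntegrable (fun t => (b - t) ^ (α - 1) * (φ t * g t)) volume m b :=
    hrpow2.mul_continuousOn (((hφcont.mul hg).mono huIcc2))
  have hint_fm1 : IntervalIntegrable (fun t => (t - a) ^ (α - 1) * ((f m - φ t) * g t)) volume a m :=
    hrpow1.mul_continuousOn (((continuousOn_const.sub hφcont).mul hg).mono huIcc1)
  have hint_fm2 : IntervalIntegrable (fun t => (b - t) ^ (α - 1) * ((f m - φ t) * g t)) volume m b :=
    hrpow2.mul_continuousOn (((continuousOn_const.sub hφcont).mul hg).mono huIcc2)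
  have e1 : (∫ t in a..m, (t - a) ^ (α - 1) * (f t * g t))
      = ∫ t in a..m, (t - a) ^ (α - 1) * ((f m - φ t) * g t) := by
    rw [intervalIntegral.integral_of_le ham.le, intervalIntegral.integral_of_le ham.le]
    refine setIntegral_congr_fun measurableSet_Ioc (fun t ht => ?_)
    rw [hfφ t ⟨ht.1, lt_of_le_of_lt ht.2 hmb⟩]
  have e2 : (∫ t in m..b, (b - t) ^ (α - 1) * (f t * g t))
      = ∫ t in m..b, (b - t) ^ (α - 1) * ((f m - φ t) * g t) := by
    rw [intervalIntegral.integral_of_le hmb.le, intervalIntegral.integral_of_le hmb.le,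
      integral_Ioc_eq_integral_Ioo, integral_Ioc_eq_integral_Ioo]
    refine setIntegral_congr_fun measurableSet_Ioo (fun t ht => ?_)
    rw [hfφ t ⟨lt_of_lt_of_le ham ht.1.le, ht.2⟩]
  have key1 : f m * (∫ t in a..m, (t - a) ^ (α - 1) * g t)
      - (∫ t in a..m, (t - a) ^ (α - 1) * (f t * g t)) = W1 := by
    rw [e1, ← intervalIntegral.integral_const_mul, ← intervalIntegral.integral_sub
      (hint_g1.const_mul (f m)) hint_fm1, hW1]
    apply intervalIntegral.integral_congr
    intro t _; simp only; ring
  have key2 : f m * (∫ t in m..b, (b - t) ^ (α - 1) * g t)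
      - (∫ t in m..b, (b - t) ^ (α - 1) * (f t * g t)) = W2 := by
    rw [e2, ← intervalIntegral.integral_const_mul, ← intervalIntegral.integral_sub
      (hint_g2.const_mul (f m)) hint_fm2, hW2]
    apply intervalIntegral.integral_congr
    intro t _; simp only; ring
  -- the coefficients of the polynomial bounds
  set q0 : ℝ := c1 * h + c2 * (2 * a * h + h ^ 2) / 2 with hq0
  set q1 : ℝ := -(c1 + c2 * a) with hq1
  set q2 : ℝ := -c2 / 2 with hq2
  set r0 : ℝ := c1 * h + c2 * (2 * b * h - h ^ 2) / 2 with hr0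
  set r1 : ℝ := -(c1 + c2 * b) with hr1
  set r2 : ℝ := c2 / 2 with hr2
  have hQpoly1 : ∀ t : ℝ, Q t = q0 + q1 * (t - a) + q2 * (t - a) ^ 2 := by
    intro t
    rw [hQdef, hq0, hq1, hq2]
    have : m = a + h := by rw [hm, hh]; ring
    rw [this]; ring
  have hQpoly2 : ∀ t : ℝ, -Q t = r0 + r1 * (b - t) + r2 * (b - t) ^ 2 := by
    intro t
    rw [hQdef, hr0, hr1, hr2]
    have : m = b - h := by rw [hm, hh]; ring
    rw [this]; ring
  -- bound the two pieces
  have hbound1 : |W1| ≤ ∫ t in a..m, (t - a) ^ (α - 1) * Q t * M := by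
    have hR1int : IntervalIntegrable (fun t => (t - a) ^ (α - 1) * Q t * M) volume a m :=
      (hrpow1.mul_continuousOn hQcont.continuousOn).mul_const M
    calc |W1| ≤ ∫ t in a..m, |(t - a) ^ (α - 1) * (φ t * g t)| := by
          rw [hW1]; exact intervalIntegral.abs_integral_le_integral_abs ham.le
      _ ≤ ∫ t in a..m, (t - a) ^ (α - 1) * Q t * M := by
          apply intervalIntegral.integral_mono_on ham.le hint_ψ1.abs hR1int
          intro t ht
          have h1 : 0 ≤ (t - a) ^ (α - 1) := Real.rpow_nonneg (by linarith [ht.1]) _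
          have h2 : |φ t| ≤ Q t := hφQ1 t ht
          have h3 : |g t| ≤ M := hM t ⟨ht.1, le_trans ht.2 hmb.le⟩
          calc |(t - a) ^ (α - 1) * (φ t * g t)|
              = (t - a) ^ (α - 1) * (|φ t| * |g t|) := by
                rw [abs_mul, abs_mul, abs_of_nonneg h1]
            _ ≤ (t - a) ^ (α - 1) * (Q t * M) := by
                apply mul_le_mul_of_nonneg_left _ h1
                exact mul_le_mul h2 h3 (abs_nonneg _) (le_trans (abs_nonneg _) h2)
            _ = (t - a) ^ (α - 1) * Q t * M := by ring
  have hbound2 : |W2| ≤ ∫ t in m..b, (b - t) ^ (α - 1) * (-Q t) * M := by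
    have hR2int : IntervalIntegrable (fun t => (b - t) ^ (α - 1) * (-Q t) * M) volume m b :=
      (hrpow2.mul_continuousOn hQcont.neg.continuousOn).mul_const M
    calc |W2| ≤ ∫ t in m..b, |(b - t) ^ (α - 1) * (φ t * g t)| := by
          rw [hW2]; exact intervalIntegral.abs_integral_le_integral_abs hmb.le
      _ ≤ ∫ t in m..b, (b - t) ^ (α - 1) * (-Q t) * M := by
          apply intervalIntegral.integral_mono_on hmb.le hint_ψ2.abs hR2int
          intro t ht
          have h1 : 0 ≤ (b - t) ^ (α - 1) := Real.rpow_nonneg (by linarith [ht.2]) _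
          have h2 : |φ t| ≤ -Q t := hφQ2 t ht
          have h3 : |g t| ≤ M := hM t ⟨le_trans ham.le ht.1, ht.2⟩
          calc |(b - t) ^ (α - 1) * (φ t * g t)|
              = (b - t) ^ (α - 1) * (|φ t| * |g t|) := by
                rw [abs_mul, abs_mul, abs_of_nonneg h1]
            _ ≤ (b - t) ^ (α - 1) * (-Q t * M) := by
                apply mul_le_mul_of_nonneg_left _ h1
                exact mul_le_mul h2 h3 (abs_nonneg _) (le_trans (abs_nonneg _) h2)
            _ = (b - t) ^ (α - 1) * (-Q t) * M := by ring
  -- compute the bounding integrals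
  have hI1 : (∫ t in a..m, (t - a) ^ (α - 1) * Q t * M)
      = M * (q0 * (h ^ α / α) + q1 * (h ^ (α + 1) / (α + 1)) + q2 * (h ^ (α + 2) / (α + 2))) := by
    have e : Set.EqOn (fun t => (t - a) ^ (α - 1) * Q t * M)
        (fun t => M * q0 * (t - a) ^ (α - 1) + (M * q1 * (t - a) ^ α
          + M * q2 * (t - a) ^ (α + 1))) (Set.Ioc a m) := by
      intro t ht
      have hx : 0 < t - a := by simp only [Set.mem_Ioc] at ht; linarith [ht.1]
      have r1' : (t - a) ^ α = (t - a) ^ (α - 1) * (t - a) := by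
        rw [← Real.rpow_add_one hx.ne' (α - 1)]; norm_num
      have r2' : (t - a) ^ (α + 1) = (t - a) ^ (α - 1) * (t - a) ^ (2:ℕ) := by
        rw [← Real.rpow_natCast (t - a) 2, ← Real.rpow_add hx]; congr 1; push_cast; ring
      simp only
      rw [r1', r2', hQpoly1 t]; ring
    rw [intervalIntegral.integral_of_le ham.le, setIntegral_congr_fun measurableSet_Ioc e,
      ← intervalIntegral.integral_of_le ham.le]
    rw [intervalIntegral.integral_add ((hrpow1' (α - 1) (by linarith)).const_mul _)
        (((hrpow1' α (by linarith)).const_mul _).add ((hrpow1' (α + 1) (by linarith)).const_mul _)),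
      intervalIntegral.integral_add ((hrpow1' α (by linarith)).const_mul _)
        ((hrpow1' (α + 1) (by linarith)).const_mul _)]
    rw [intervalIntegral.integral_const_mul, intervalIntegral.integral_const_mul,
      intervalIntegral.integral_const_mul]
    rw [aux_rpow_left a m (α - 1) (by linarith), aux_rpow_left a m α (by linarith),
      aux_rpow_left a m (α + 1) (by linarith), hma]
    have e1' : α - 1 + 1 = α := by ring
    have e2' : α + 1 + 1 = α + 2 := by ring
    rw [e1', e2']
    ring
  have hI2 : (∫ t in m..b, (b - t) ^ (α - 1) * (-Q t) * M)
      = M * (r0 * (h ^ α / α) + r1 * (h ^ (α + 1) / (α + 1)) + r2 * (h ^ (α + 2) / (α + 2))) := by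
    have e : Set.EqOn (fun t => (b - t) ^ (α - 1) * (-Q t) * M)
        (fun t => M * r0 * (b - t) ^ (α - 1) + (M * r1 * (b - t) ^ α
          + M * r2 * (b - t) ^ (α + 1))) (Set.Ioo m b) := by
      intro t ht
      have hx : 0 < b - t := by simp only [Set.mem_Ioo] at ht; linarith [ht.2]
      have r1' : (b - t) ^ α = (b - t) ^ (α - 1) * (b - t) := by
        rw [← Real.rpow_add_one hx.ne' (α - 1)]; norm_num
      have r2' : (b - t) ^ (α + 1) = (b - t) ^ (α - 1) * (b - t) ^ (2:ℕ) := by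
        rw [← Real.rpow_natCast (b - t) 2, ← Real.rpow_add hx]; congr 1; push_cast; ring
      simp only
      rw [r1', r2', hQpoly2 t]; ring
    rw [intervalIntegral.integral_of_le hmb.le, integral_Ioc_eq_integral_Ioo,
      setIntegral_congr_fun measurableSet_Ioo e, ← integral_Ioc_eq_integral_Ioo,
      ← intervalIntegral.integral_of_le hmb.le]
    rw [intervalIntegral.integral_add ((hrpow2' (α - 1) (by linarith)).const_mul _)
        (((hrpow2' α (by linarith)).const_mul _).add ((hrpow2' (α + 1) (by linarith)).const_mul _)),
      intervalIntegral.integral_add ((hrpow2' α (by linarith)).const_mul _)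
        ((hrpow2' (α + 1) (by linarith)).const_mul _)]
    rw [intervalIntegral.integral_const_mul, intervalIntegral.integral_const_mul,
      intervalIntegral.integral_const_mul]
    rw [aux_rpow_right m b (α - 1) (by linarith), aux_rpow_right m b α (by linarith),
      aux_rpow_right m b (α + 1) (by linarith), hbm]
    have e1' : α - 1 + 1 = α := by ring
    have e2' : α + 1 + 1 = α + 2 := by ring
    rw [e1', e2']
    ring
  -- assemble
  simp only [Jminus, Jplus]
  have main : f m * ((1 / Real.Gamma α) * (∫ t in a..m, (t - a) ^ (α - 1) * g t)
        + (1 / Real.Gamma α) * (∫ t in m..b, (b - t) ^ (α - 1) * g t))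
      - ((1 / Real.Gamma α) * (∫ t in a..m, (t - a) ^ (α - 1) * (f t * g t))
        + (1 / Real.Gamma α) * (∫ t in m..b, (b - t) ^ (α - 1) * (f t * g t)))
      = (1 / Real.Gamma α) * (W1 + W2) := by
    rw [← key1, ← key2]; ring
  rw [main, abs_mul, abs_of_nonneg (by positivity : (0:ℝ) ≤ 1 / Real.Gamma α)]
  have habs_sum : |W1 + W2| ≤ (∫ t in a..m, (t - a) ^ (α - 1) * Q t * M)
      + ∫ t in m..b, (b - t) ^ (α - 1) * (-Q t) * M := by
    calc |W1 + W2| ≤ |W1| + |W2| := abs_add_le _ _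
      _ ≤ _ := add_le_add hbound1 hbound2
  calc (1 / Real.Gamma α) * |W1 + W2|
      ≤ (1 / Real.Gamma α) * ((∫ t in a..m, (t - a) ^ (α - 1) * Q t * M)
        + ∫ t in m..b, (b - t) ^ (α - 1) * (-Q t) * M) :=
        mul_le_mul_of_nonneg_left habs_sum (by positivity)
    _ = (b - a) ^ (α + 1) * M / ((2:ℝ) ^ (α + 1) * Real.Gamma (α + 1) * (α + 1)) * (A + B) := by
        rw [hI1, hI2]
        have hq0r0 : q0 + r0 = h * (A + B) := by
          rw [hq0, hr0, hc1, hc2]; field_simp; ring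
        have hq1r1 : q1 + r1 = -(A + B) := by
          rw [hq1, hr1, hc1, hc2]; field_simp; ring
        have hq2r2 : q2 + r2 = 0 := by rw [hq2, hr2]; ring
        have hGam : Real.Gamma (α + 1) = α * Real.Gamma α := Real.Gamma_add_one hα.ne'
        have hpow : (b - a) ^ (α + 1) = h ^ (α + 1) * 2 ^ (α + 1) := by
          rw [hh, ← Real.mul_rpow (by positivity) (by norm_num)]
          norm_num
        have hpow2 : h ^ (α + 1) = h ^ α * h := by
          rw [← Real.rpow_add_one hh0.ne' α]
        have hpow3 : h ^ (α + 2) = h ^ (α + 1) * h := by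
          rw [← Real.rpow_add_one hh0.ne' (α + 1)]; congr 1; ring
        have h2pos : (0:ℝ) < (2:ℝ) ^ (α + 1) := by positivity
        rw [hGam, hpow]
        have expand : (1 / Real.Gamma α) *
            (M * (q0 * (h ^ α / α) + q1 * (h ^ (α + 1) / (α + 1)) + q2 * (h ^ (α + 2) / (α + 2)))
            + M * (r0 * (h ^ α / α) + r1 * (h ^ (α + 1) / (α + 1)) + r2 * (h ^ (α + 2) / (α + 2))))
            = (1 / Real.Gamma α) * M * ((q0 + r0) * (h ^ α / α)
              + (q1 + r1) * (h ^ (α + 1) / (α + 1)) + (q2 + r2) * (h ^ (α + 2) / (α + 2))) := by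
          ring
        rw [expand, hq0r0, hq1r1, hq2r2, hpow2, hpow3]
        field_simp
        ring
end

section
/- Let f:I⊆[0,∞)→ℝ be differentiable on the interior of I with f′ integrable on [a,b]⊂I, a<b, and g:[a,b]→ℝ continuous. If |f′| is s-convex in the second sense on [a,b] for some fixed s∈(0,1], then for α>0: |f((a+b)/2)·[J_{((a+b)/2)−}^α g(a) + J_{((a+b)/2)+}^α g(b)] − [J_{((a+b)/2)−}^α(fg)(a) + J_{((a+b)/2)+}^α(fg)(b)]| ≤ ((b−a)^{α+1}‖g‖_{[a,b],∞}/Γ(α+1)) · [B_{1/2}(α+1, s+1) + 1/(2^{α+s+1}(α+s+1))] · (|f′(a)| + |f′(b)|). -/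
open intervalIntegral MeasureTheory

/-- `h` is s-convex in the second sense on the set `D`. -/
def SConvexOn (s : ℝ) (D : Set ℝ) (h : ℝ → ℝ) : Prop :=
  ∀ x ∈ D, ∀ y ∈ D, ∀ l ∈ Set.Icc (0:ℝ) 1,
    h (l * x + (1 - l) * y) ≤ l ^ s * h x + (1 - l) ^ s * h y

/-- Incomplete Beta function `B_x(p,q)`. -/
noncomputable def incBeta (x p q : ℝ) : ℝ :=
  ∫ t in (0:ℝ)..x, t ^ (p - 1) * (1 - t) ^ (q - 1)

section Aux

lemma wint_left (a c α : ℝ) (hα : 0 < α) :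
    IntervalIntegrable (fun t => (t - a) ^ (α - 1)) volume a c := by
  have h := (intervalIntegrable_rpow' (a := a - a) (b := c - a) (r := α - 1)
    (by linarith)).comp_sub_right a
  simpa using h

lemma wint_right (b c α : ℝ) (hα : 0 < α) :
    IntervalIntegrable (fun t => (b - t) ^ (α - 1)) volume c b := by
  have h := (intervalIntegrable_rpow' (a := b - c) (b := b - b) (r := α - 1)
    (by linarith)).comp_sub_left b
  simpa using h

end Aux

theorem fejer_fractional_sconvex_bound (a b : ℝ) (ha : 0 ≤ a) (hab : a < b)
    (α : ℝ) (hα : 0 < α) (s : ℝ) (hs : s ∈ Set.Ioc (0:ℝ) 1) (f f' g : ℝ → ℝ)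
    (hf : ∀ t ∈ Set.Ioo a b, HasDerivAt f (f' t) t)
    (hf'int : IntervalIntegrable f' volume a b)
    (hg : ContinuousOn g (Set.Icc a b))
    (habs : SConvexOn s (Set.Icc a b) (fun t => |f' t|)) :
    |f ((a + b) / 2) * (Jminus α ((a + b) / 2) g a + Jplus α ((a + b) / 2) g b) -
      (Jminus α ((a + b) / 2) (fun t => f t * g t) a +
        Jplus α ((a + b) / 2) (fun t => f t * g t) b)| ≤
    (b - a) ^ (α + 1) * supNorm g a b / Real.Gamma (α + 1) *
      (incBeta (1/2) (α + 1) (s + 1) + 1 / ((2:ℝ) ^ (α + s + 1) * (α + s + 1))) *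
      (|f' a| + |f' b|) := by
  obtain ⟨hs0, hs1⟩ := hs
  set m : ℝ := (a + b) / 2 with hm
  have ham : a < m := by rw [hm]; linarith
  have hmb : m < b := by rw [hm]; linarith
  have hc : (0:ℝ) < b - a := by linarith
  have hG : 0 < Real.Gamma α := Real.Gamma_pos_of_pos hα
  set G := Real.Gamma α with hGdef
  set A := |f' a| with hA
  set B := |f' b| with hB
  have hA0 : 0 ≤ A := abs_nonneg _
  have hB0 : 0 ≤ B := abs_nonneg _
  -- continuity of rpow
  have hcont_s : Continuous fun x : ℝ => x ^ s := Real.continuous_rpow_const hs0.le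
  have hcont_α : Continuous fun x : ℝ => x ^ α := Real.continuous_rpow_const hα.le
  -- the s-convex majorant of |f'|
  set hfun : ℝ → ℝ := fun u => ((b - u)/(b - a)) ^ s * A + ((u - a)/(b - a)) ^ s * B
    with hhfun
  have hfun_cont : Continuous hfun := by
    apply Continuous.add
    · exact (hcont_s.comp (by continuity)).mul continuous_const
    · exact (hcont_s.comp (by continuity)).mul continuous_const
  have hfun_bound : ∀ u ∈ Set.Icc a b, |f' u| ≤ hfun u := by
    intro u hu
    have hl : (b - u)/(b - a) ∈ Set.Icc (0:ℝ) 1 := by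
      constructor
      · exact div_nonneg (by linarith [hu.2]) hc.le
      · rw [div_le_one hc]; linarith [hu.1]
    have hx : (b - u)/(b - a) * a + (1 - (b - u)/(b - a)) * b = u := by
      field_simp
      ring
    have h1l : 1 - (b - u)/(b - a) = (u - a)/(b - a) := by
      field_simp
      ring
    have := habs a ⟨le_refl a, hab.le⟩ b ⟨hab.le, le_refl b⟩ _ hl
    rw [hx, h1l] at this
    simpa [hhfun] using this
  -- D t = ∫ t..m f'
  set D : ℝ → ℝ := fun t => ∫ u in t..m, f' u with hD
  have hmIcc : m ∈ Set.Icc a b := ⟨ham.le, hmb.le⟩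
  have hf'sub : ∀ t₁ ∈ Set.Icc a b, ∀ t₂ ∈ Set.Icc a b,
      IntervalIntegrable f' volume t₁ t₂ := by
    intro t₁ h1 t₂ h2
    apply hf'int.mono_set
    rw [Set.uIcc_of_le hab.le]
    exact Set.uIcc_subset_Icc h1 h2
  have hDf : ∀ t ∈ Set.Ioo a b, f m - f t = D t := by
    intro t ht
    have hsub : Set.uIcc t m ⊆ Set.Ioo a b :=
      Set.ordConnected_Ioo.uIcc_subset ht ⟨ham, hmb⟩
    have := integral_eq_sub_of_hasDerivAt (f := f) (f' := f')
      (fun u hu => hf u (hsub hu))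
      (hf'sub t ⟨ht.1.le, ht.2.le⟩ m hmIcc)
    simp only [hD]
    rw [this]
  have hDcont : ContinuousOn D (Set.Icc a b) := by
    have h1 : ContinuousOn (fun t => ∫ u in m..t, f' u) (Set.Icc a b) := by
      have := continuousOn_primitive_interval' (μ := volume) (f := f')
        (b₁ := a) (b₂ := b) hf'int (by rw [Set.uIcc_of_le hab.le]; exact hmIcc)
      rwa [Set.uIcc_of_le hab.le] at this
    have : ContinuousOn (fun t => -(∫ u in m..t, f' u)) (Set.Icc a b) := h1.neg
    apply this.congr
    intro t _
    simp only [hD]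
    rw [integral_symm]
  -- sup norm bound
  set M := supNorm g a b with hM
  have hgM : ∀ t ∈ Set.Icc a b, |g t| ≤ M := by
    intro t ht
    have hbdd : BddAbove (Set.range fun t : Set.Icc a b => |g (t : ℝ)|) := by
      have h1 : BddAbove ((fun x => |g x|) '' Set.Icc a b) :=
        (isCompact_Icc.image_of_continuousOn hg.abs).bddAbove
      have h2 : (fun x => |g x|) '' Set.Icc a b
          = Set.range fun t : Set.Icc a b => |g (t : ℝ)| := by
        exact Set.image_eq_range _ _
      rwa [h2] at h1
    exact le_ciSup hbdd ⟨t, ht⟩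
  have hM0 : 0 ≤ M := le_trans (abs_nonneg _) (hgM a ⟨le_refl a, hab.le⟩)
  -- Φ functions
  set Φ2 : ℝ → ℝ := fun t => ∫ u in m..t, hfun u with hΦ2
  set Φ1 : ℝ → ℝ := fun t => ∫ u in t..m, hfun u with hΦ1
  have hΦ2deriv : ∀ t, HasDerivAt Φ2 (hfun t) t := by
    intro t
    exact integral_hasDerivAt_right (hfun_cont.intervalIntegrable m t)
      (hfun_cont.stronglyMeasurableAtFilter _ _) hfun_cont.continuousAt
  have hΦ2cont : Continuous Φ2 :=
    continuous_iff_continuousAt.mpr fun t => (hΦ2deriv t).continuousAt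
  have hΦ12 : ∀ t, Φ1 t = -Φ2 t := by
    intro t; simp only [hΦ1, hΦ2]; rw [integral_symm]
  have hΦ1deriv : ∀ t, HasDerivAt Φ1 (-hfun t) t := by
    intro t
    have : HasDerivAt (fun t => -Φ2 t) (-hfun t) t := (hΦ2deriv t).neg
    exact this.congr_of_eventuallyEq (Filter.Eventually.of_forall fun x => hΦ12 x)
  have hΦ1cont : Continuous Φ1 :=
    continuous_iff_continuousAt.mpr fun t => (hΦ1deriv t).continuousAt
  -- weights
  set w1 : ℝ → ℝ := fun t => (t - a) ^ (α - 1) with hw1def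
  set w2 : ℝ → ℝ := fun t => (b - t) ^ (α - 1) with hw2def
  have hw1 : IntervalIntegrable w1 volume a m := wint_left a m α hα
  have hw2 : IntervalIntegrable w2 volume m b := wint_right b m α hα
  have hIccm1 : Set.uIcc a m ⊆ Set.Icc a b := by
    rw [Set.uIcc_of_le ham.le]; exact Set.Icc_subset_Icc le_rfl hmb.le
  have hIccm2 : Set.uIcc m b ⊆ Set.Icc a b := by
    rw [Set.uIcc_of_le hmb.le]; exact Set.Icc_subset_Icc ham.le le_rfl
  have hgc1 : ContinuousOn g (Set.uIcc a m) := hg.mono hIccm1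
  have hgc2 : ContinuousOn g (Set.uIcc m b) := hg.mono hIccm2
  -- pointwise bounds on D
  have hDb1 : ∀ t ∈ Set.Icc a m, |D t| ≤ Φ1 t := by
    intro t ht
    have ht' : t ∈ Set.Icc a b := ⟨ht.1, ht.2.trans hmb.le⟩
    calc |D t| ≤ ∫ u in t..m, |f' u| := abs_integral_le_integral_abs ht.2
      _ ≤ Φ1 t := by
          apply integral_mono_on ht.2 (hf'sub t ht' m hmIcc).abs
            (hfun_cont.intervalIntegrable _ _)
          intro u hu
          exact hfun_bound u ⟨le_trans ht.1 hu.1, le_trans hu.2 hmb.le⟩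
  have hDb2 : ∀ t ∈ Set.Icc m b, |D t| ≤ Φ2 t := by
    intro t ht
    have ht' : t ∈ Set.Icc a b := ⟨ham.le.trans ht.1, ht.2⟩
    have : D t = -(∫ u in m..t, f' u) := by simp only [hD]; rw [integral_symm]
    rw [this, abs_neg]
    calc |∫ u in m..t, f' u| ≤ ∫ u in m..t, |f' u| := abs_integral_le_integral_abs ht.1
      _ ≤ Φ2 t := by
          apply integral_mono_on ht.1 (hf'sub m hmIcc t ht').abs
            (hfun_cont.intervalIntegrable _ _)
          intro u hu
          exact hfun_bound u ⟨ham.le.trans hu.1, hu.2.trans ht.2⟩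
  -- integrability of the various products
  have hDc1 : ContinuousOn (fun t => (f m - D t) * g t) (Set.uIcc a m) :=
    ((continuousOn_const.sub (hDcont.mono hIccm1)).mul hgc1)
  have hDc2 : ContinuousOn (fun t => (f m - D t) * g t) (Set.uIcc m b) :=
    ((continuousOn_const.sub (hDcont.mono hIccm2)).mul hgc2)
  have hi_w1g : IntervalIntegrable (fun t => w1 t * g t) volume a m :=
    hw1.mul_continuousOn hgc1
  have hi_w2g : IntervalIntegrable (fun t => w2 t * g t) volume m b :=
    hw2.mul_continuousOn hgc2
  have hi1 : IntervalIntegrable (fun t => w1 t * ((f m - D t) * g t)) volume a m :=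
    hw1.mul_continuousOn hDc1
  have hi2 : IntervalIntegrable (fun t => w2 t * ((f m - D t) * g t)) volume m b :=
    hw2.mul_continuousOn hDc2
  have hiI1 : IntervalIntegrable (fun t => w1 t * (g t * D t)) volume a m :=
    hw1.mul_continuousOn (hgc1.mul (hDcont.mono hIccm1))
  have hiI2 : IntervalIntegrable (fun t => w2 t * (g t * D t)) volume m b :=
    hw2.mul_continuousOn (hgc2.mul (hDcont.mono hIccm2))
  -- replace f by (f m - D) inside the J integrals
  have hJm : Jminus α m (fun t => f t * g t) a
      = (1/G) * ∫ t in a..m, w1 t * ((f m - D t) * g t) := by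
    simp only [Jminus, hGdef]
    congr 1
    apply intervalIntegral.integral_congr_ae
    filter_upwards with x
    intro hx
    rw [Set.uIoc_of_le ham.le] at hx
    have hx' : x ∈ Set.Ioo a b := ⟨hx.1, lt_of_le_of_lt hx.2 hmb⟩
    rw [← hDf x hx']
    simp only [hw1def, hw2def]
    ring
  have hJp : Jplus α m (fun t => f t * g t) b
      = (1/G) * ∫ t in m..b, w2 t * ((f m - D t) * g t) := by
    simp only [Jplus, hGdef]
    congr 1
    apply intervalIntegral.integral_congr_ae
    have hbne : ∀ᵐ x : ℝ ∂volume, x ≠ b := by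
      rw [ae_iff]
      simp only [not_not, Set.setOf_eq_eq_singleton]
      exact measure_singleton b
    filter_upwards [hbne] with x hxb hx
    rw [Set.uIoc_of_le hmb.le] at hx
    have hx' : x ∈ Set.Ioo a b := ⟨ham.trans hx.1, lt_of_le_of_ne hx.2 hxb⟩
    rw [← hDf x hx']
    simp only [hw1def, hw2def]
    ring
  -- key identity
  set I1 : ℝ := ∫ t in a..m, w1 t * (g t * D t) with hI1def
  set I2 : ℝ := ∫ t in m..b, w2 t * (g t * D t) with hI2def
  have e1 : I1 = f m * (∫ t in a..m, w1 t * g t)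
      - ∫ t in a..m, w1 t * ((f m - D t) * g t) := by
    rw [hI1def,
      show (fun t => w1 t * (g t * D t))
        = fun t => f m * (w1 t * g t) - w1 t * ((f m - D t) * g t) from
        funext fun t => by ring,
      integral_sub (hi_w1g.const_mul (f m)) hi1, intervalIntegral.integral_const_mul]
  have e2 : I2 = f m * (∫ t in m..b, w2 t * g t)
      - ∫ t in m..b, w2 t * ((f m - D t) * g t) := by
    rw [hI2def,
      show (fun t => w2 t * (g t * D t))
        = fun t => f m * (w2 t * g t) - w2 t * ((f m - D t) * g t) from
        funext fun t => by ring,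
      integral_sub (hi_w2g.const_mul (f m)) hi2, intervalIntegral.integral_const_mul]
  have main : f m * (Jminus α m g a + Jplus α m g b) -
      (Jminus α m (fun t => f t * g t) a + Jplus α m (fun t => f t * g t) b)
      = (1/G) * (I1 + I2) := by
    rw [hJm, hJp, e1, e2]
    simp only [Jminus, Jplus, hGdef]
    ring
  -- bounds for I1, I2
  set K1 : ℝ := ∫ t in a..m, w1 t * Φ1 t with hK1def
  set K2 : ℝ := ∫ t in m..b, w2 t * Φ2 t with hK2def
  have hbint1 : IntervalIntegrable (fun t => M * (w1 t * Φ1 t)) volume a m :=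
    (hw1.mul_continuousOn hΦ1cont.continuousOn).const_mul M
  have hbint2 : IntervalIntegrable (fun t => M * (w2 t * Φ2 t)) volume m b :=
    (hw2.mul_continuousOn hΦ2cont.continuousOn).const_mul M
  have habs1 : |I1| ≤ M * K1 := by
    have h1 : |I1| ≤ ∫ t in a..m, |w1 t * (g t * D t)| :=
      hI1def ▸ abs_integral_le_integral_abs ham.le
    have h2 : ∫ t in a..m, |w1 t * (g t * D t)| ≤ ∫ t in a..m, M * (w1 t * Φ1 t) := by
      apply integral_mono_on ham.le hiI1.abs hbint1
      intro t ht
      have hw1nn : 0 ≤ w1 t := Real.rpow_nonneg (by linarith [ht.1]) _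
      rw [abs_mul, abs_mul, abs_of_nonneg hw1nn]
      calc w1 t * (|g t| * |D t|)
          ≤ w1 t * (M * Φ1 t) := by
            apply mul_le_mul_of_nonneg_left _ hw1nn
            exact mul_le_mul (hgM t ⟨ht.1, ht.2.trans hmb.le⟩) (hDb1 t ht)
              (abs_nonneg _) hM0
        _ = M * (w1 t * Φ1 t) := by ring
    calc |I1| ≤ ∫ t in a..m, M * (w1 t * Φ1 t) := h1.trans h2
      _ = M * K1 := by rw [intervalIntegral.integral_const_mul, hK1def]
  have habs2 : |I2| ≤ M * K2 := by
    have h1 : |I2| ≤ ∫ t in m..b, |w2 t * (g t * D t)| :=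
      hI2def ▸ abs_integral_le_integral_abs hmb.le
    have h2 : ∫ t in m..b, |w2 t * (g t * D t)| ≤ ∫ t in m..b, M * (w2 t * Φ2 t) := by
      apply integral_mono_on hmb.le hiI2.abs hbint2
      intro t ht
      have hw2nn : 0 ≤ w2 t := Real.rpow_nonneg (by linarith [ht.2]) _
      rw [abs_mul, abs_mul, abs_of_nonneg hw2nn]
      calc w2 t * (|g t| * |D t|)
          ≤ w2 t * (M * Φ2 t) := by
            apply mul_le_mul_of_nonneg_left _ hw2nn
            exact mul_le_mul (hgM t ⟨ham.le.trans ht.1, ht.2⟩) (hDb2 t ht)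
              (abs_nonneg _) hM0
        _ = M * (w2 t * Φ2 t) := by ring
    calc |I2| ≤ ∫ t in m..b, M * (w2 t * Φ2 t) := h1.trans h2
      _ = M * K2 := by rw [intervalIntegral.integral_const_mul, hK2def]
  -- integration by parts / FTC step
  set R1 : ℝ := ∫ t in a..m, (t - a) ^ α * hfun t with hR1def
  set R2 : ℝ := ∫ t in m..b, (b - t) ^ α * hfun t with hR2def
  have hqcont1 : Continuous fun t : ℝ => (t - a) ^ α / α * hfun t :=
    ((hcont_α.comp (continuous_id.sub continuous_const)).div_const α).mul hfun_cont
  have hqcont2 : Continuous fun t : ℝ => (b - t) ^ α / α * hfun t :=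
    ((hcont_α.comp (continuous_const.sub continuous_id)).div_const α).mul hfun_cont
  have hK1 : K1 = (1/α) * R1 := by
    set Q1 : ℝ → ℝ := fun t => (t - a) ^ α / α * Φ1 t with hQ1def
    have hQ1cont : ContinuousOn Q1 (Set.Icc a m) :=
      (((hcont_α.comp (continuous_id.sub continuous_const)).div_const α).mul
        hΦ1cont).continuousOn
    have hderiv : ∀ t ∈ Set.Ioo a m, HasDerivWithinAt Q1
        (w1 t * Φ1 t - (t - a) ^ α / α * hfun t) (Set.Ioi t) t := by
      intro t ht
      have h0 : HasDerivAt (fun t : ℝ => t - a) 1 t := (hasDerivAt_id t).sub_const a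
      have h1 : HasDerivAt (fun y : ℝ => y ^ α) (α * (t - a) ^ (α - 1)) (t - a) :=
        Real.hasDerivAt_rpow_const (Or.inl (sub_ne_zero.mpr (ne_of_gt ht.1)))
      have hd1 : HasDerivAt (fun t : ℝ => (t - a) ^ α) (α * (t - a) ^ (α - 1)) t := by
        have h2 := h1.comp t h0
        rw [mul_one] at h2
        exact h2
      have hd := (hd1.div_const α).mul (hΦ1deriv t)
      refine (HasDerivAt.hasDerivWithinAt ?_)
      refine hd.congr_deriv ?_
      rw [hw1def]
      field_simp
      ring
    have hdint : IntervalIntegrable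
        (fun t => w1 t * Φ1 t - (t - a) ^ α / α * hfun t) volume a m :=
      (hw1.mul_continuousOn hΦ1cont.continuousOn).sub
        (hqcont1.intervalIntegrable _ _)
    have hftc := integral_eq_sub_of_hasDeriv_right_of_le ham.le hQ1cont hderiv hdint
    have hQ1a : Q1 a = 0 := by
      simp [hQ1def, Real.zero_rpow hα.ne']
    have hQ1m : Q1 m = 0 := by
      simp [hQ1def, hΦ1]
    rw [hQ1m, hQ1a, sub_zero,
      integral_sub (hw1.mul_continuousOn hΦ1cont.continuousOn)
        (hqcont1.intervalIntegrable _ _), sub_eq_zero] at hftc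
    rw [hK1def, hftc,
      show (fun t => (t - a) ^ α / α * hfun t)
        = fun t => (1/α) * ((t - a) ^ α * hfun t) from funext fun t => by ring,
      intervalIntegral.integral_const_mul, hR1def]
  have hK2 : K2 = (1/α) * R2 := by
    set Q2 : ℝ → ℝ := fun t => -((b - t) ^ α / α * Φ2 t) with hQ2def
    have hQ2cont : ContinuousOn Q2 (Set.Icc m b) :=
      ((((hcont_α.comp (continuous_const.sub continuous_id)).div_const α).mul
        hΦ2cont).neg).continuousOn
    have hderiv : ∀ t ∈ Set.Ioo m b, HasDerivWithinAt Q2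
        (w2 t * Φ2 t - (b - t) ^ α / α * hfun t) (Set.Ioi t) t := by
      intro t ht
      have h0 : HasDerivAt (fun t : ℝ => b - t) (-1) t := by
        simpa using (hasDerivAt_id t).const_sub b
      have h1 : HasDerivAt (fun y : ℝ => y ^ α) (α * (b - t) ^ (α - 1)) (b - t) :=
        Real.hasDerivAt_rpow_const (Or.inl (sub_ne_zero.mpr (ne_of_gt ht.2)))
      have hd1 : HasDerivAt (fun t : ℝ => (b - t) ^ α) (α * (b - t) ^ (α - 1) * (-1)) t :=
        h1.comp t h0
      have hd := ((hd1.div_const α).mul (hΦ2deriv t)).neg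
      refine (HasDerivAt.hasDerivWithinAt ?_)
      refine hd.congr_deriv ?_
      rw [hw2def]
      field_simp
      ring
    have hdint : IntervalIntegrable
        (fun t => w2 t * Φ2 t - (b - t) ^ α / α * hfun t) volume m b :=
      (hw2.mul_continuousOn hΦ2cont.continuousOn).sub
        (hqcont2.intervalIntegrable _ _)
    have hftc := integral_eq_sub_of_hasDeriv_right_of_le hmb.le hQ2cont hderiv hdint
    have hQ2b : Q2 b = 0 := by
      simp [hQ2def, Real.zero_rpow hα.ne']
    have hQ2m : Q2 m = 0 := by
      simp [hQ2def, hΦ2]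
    rw [hQ2b, hQ2m, sub_zero,
      integral_sub (hw2.mul_continuousOn hΦ2cont.continuousOn)
        (hqcont2.intervalIntegrable _ _), sub_eq_zero] at hftc
    rw [hK2def, hftc,
      show (fun t => (b - t) ^ α / α * hfun t)
        = fun t => (1/α) * ((b - t) ^ α * hfun t) from funext fun t => by ring,
      intervalIntegral.integral_const_mul, hR2def]
  -- substitution to [0,1/2]
  have hsne : α + s ≠ 0 := by positivity
  have hsub1 : R1 = (b - a) * ∫ x in (0:ℝ)..(1/2),
      ((b - a) * x) ^ α * hfun (a + (b - a) * x) := by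
    have h := smul_integral_comp_add_mul (f := fun t => (t - a) ^ α * hfun t)
      (a := (0:ℝ)) (b := (1/2:ℝ)) (b - a) a
    rw [show a + (b - a) * 0 = a by ring, show a + (b - a) * (1/2) = m by
      rw [hm]; ring] at h
    rw [hR1def, ← h, smul_eq_mul]
    congr 1
    simp only [add_sub_cancel_left]
  have hsub2 : R2 = (b - a) * ∫ x in (0:ℝ)..(1/2),
      ((b - a) * x) ^ α * hfun (b - (b - a) * x) := by
    have h := smul_integral_comp_sub_mul (f := fun t => (b - t) ^ α * hfun t)
      (a := (0:ℝ)) (b := (1/2:ℝ)) (b - a) b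
    rw [show b - (b - a) * 0 = b by ring, show b - (b - a) * (1/2) = m by
      rw [hm]; ring] at h
    rw [hR2def, ← h, smul_eq_mul]
    congr 1
    simp only [sub_sub_cancel]
  have hint1 : IntervalIntegrable
      (fun x => ((b - a) * x) ^ α * hfun (a + (b - a) * x)) volume 0 (1/2) :=
    ((hcont_α.comp (continuous_const.mul continuous_id)).mul
      (hfun_cont.comp (continuous_const.add (continuous_const.mul continuous_id)))).intervalIntegrable _ _
  have hint2 : IntervalIntegrable
      (fun x => ((b - a) * x) ^ α * hfun (b - (b - a) * x)) volume 0 (1/2) :=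
    ((hcont_α.comp (continuous_const.mul continuous_id)).mul
      (hfun_cont.comp (continuous_const.sub (continuous_const.mul continuous_id)))).intervalIntegrable _ _
  have hptw : ∀ x ∈ Set.Icc (0:ℝ) (1/2),
      ((b - a) * x) ^ α * hfun (a + (b - a) * x)
        + ((b - a) * x) ^ α * hfun (b - (b - a) * x)
      = ((b - a) ^ α * (A + B)) * (x ^ α * (1 - x) ^ s + x ^ (α + s)) := by
    intro x hx
    have e1 : (b - (a + (b - a) * x)) / (b - a) = 1 - x := by
      field_simp
      ring
    have e2 : (a + (b - a) * x - a) / (b - a) = x := by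
      field_simp
      ring
    have e3 : (b - (b - (b - a) * x)) / (b - a) = x := by
      field_simp
      ring
    have e4 : (b - (b - a) * x - a) / (b - a) = 1 - x := by
      field_simp
      ring
    simp only [hhfun]
    rw [e1, e2, e3, e4, Real.mul_rpow hc.le hx.1, Real.rpow_add' hx.1 hsne]
    ring
  have hBeta : ∫ x in (0:ℝ)..(1/2), x ^ α * (1 - x) ^ s
      = incBeta (1/2) (α + 1) (s + 1) := by
    simp [incBeta]
  have h2pos : (0:ℝ) < (2:ℝ) ^ (α + s + 1) := Real.rpow_pos_of_pos two_pos _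
  have hPow : ∫ x in (0:ℝ)..(1/2), x ^ (α + s)
      = 1 / ((2:ℝ) ^ (α + s + 1) * (α + s + 1)) := by
    rw [integral_rpow (Or.inl (by linarith))]
    have h2 : ((1:ℝ)/2) ^ (α + s + 1) = ((2:ℝ) ^ (α + s + 1))⁻¹ := by
      rw [one_div, Real.inv_rpow (by norm_num : (0:ℝ) ≤ 2)]
    rw [Real.zero_rpow (by positivity : (0:ℝ) < α + s + 1).ne', h2, sub_zero]
    field_simp
  have hRsum : R1 + R2 = (b - a) ^ (α + 1)
      * ((A + B) * (incBeta (1/2) (α + 1) (s + 1)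
          + 1 / ((2:ℝ) ^ (α + s + 1) * (α + s + 1)))) := by
    rw [hsub1, hsub2, ← mul_add, ← integral_add hint1 hint2]
    rw [integral_congr (g := fun x => ((b - a) ^ α * (A + B))
      * (x ^ α * (1 - x) ^ s + x ^ (α + s)))
      (by rw [Set.uIcc_of_le (by norm_num : (0:ℝ) ≤ 1/2)]; exact hptw)]
    have hA1 : IntervalIntegrable (fun x : ℝ => x ^ α * (1 - x) ^ s) volume 0 (1/2) := by
      exact (hcont_α.mul (hcont_s.comp
        (continuous_const.sub continuous_id))).intervalIntegrable _ _
    have hA2 : IntervalIntegrable (fun x : ℝ => x ^ (α + s)) volume 0 (1/2) :=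
      (Real.continuous_rpow_const (by linarith : (0:ℝ) ≤ α + s)).intervalIntegrable _ _
    rw [intervalIntegral.integral_const_mul, integral_add hA1 hA2, hBeta, hPow, Real.rpow_add_one hc.ne' α]
    ring
  -- final assembly
  rw [main]
  have hG1 : (0:ℝ) < 1/G := by positivity
  calc |1/G * (I1 + I2)| = 1/G * |I1 + I2| := by
        rw [abs_mul, abs_of_pos hG1]
    _ ≤ 1/G * (M * K1 + M * K2) := by
        apply mul_le_mul_of_nonneg_left _ hG1.le
        exact (abs_add_le _ _).trans (add_le_add habs1 habs2)
    _ = 1/(G*α) * (M * (R1 + R2)) := by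
        rw [hK1, hK2]
        field_simp
    _ = (b - a) ^ (α + 1) * M / Real.Gamma (α + 1) *
          (incBeta (1/2) (α + 1) (s + 1)
            + 1 / ((2:ℝ) ^ (α + s + 1) * (α + s + 1))) * (A + B) := by
        rw [hRsum, Real.Gamma_add_one hα.ne', ← hGdef]
        field_simp
end
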